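/- Let d ≥ 1, δ > 0 and b ∈ ℝ^d. Let Q ⊆ ℝ^d be finite and nonempty with ‖q − b‖∞ ≤ 5δ/3 for every q ∈ Q, let P ⊆ ℝ^d be finite and nonempty, and let T ⊆ ℝ^d be a set with ‖τ‖∞ ≤ δ/3 for every τ ∈ T. Let γ : Q → ℝ^d be any function such that for each q ∈ Q and each coordinate r, γ(q)_r ∈ {−2δ/3, 0, 2δ/3} and |(q−b)_r − γ(q)_r| ≤ |(q−b)_r − g| for all g ∈ {−2δ/3, 0, 2δ/3}, and set C = { b + (3/2)·γ(q) : q ∈ Q }. Then for every τ ∈ T: δ→H(P+τ, Q) ≤ δ if and only if δH((P ∪ C)+τ, Q) ≤ δ. (Correctness of the constant-size point gadget that reduces the Translation Problem with Orthants to undirected Hausdorff under translation.) -/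
import Mathlib


/-- Directed Hausdorff distance under the L∞ norm between subsets of ℝ^d
(for finite nonempty sets this is `max_{x∈X} min_{y∈Y} ‖x−y‖∞`, since the
norm on `Fin d → ℝ` is the sup norm). -/
noncomputable def dirHaus {d : ℕ} (X Y : Set (Fin d → ℝ)) : ℝ :=
  sSup ((fun x => sInf ((fun y => ‖x - y‖) '' Y)) '' X)

/-- Undirected Hausdorff distance under the L∞ norm. -/
noncomputable def undirHaus {d : ℕ} (X Y : Set (Fin d → ℝ)) : ℝ :=
  max (dirHaus X Y) (dirHaus Y X)

lemma dirHaus_le_iff {d : ℕ} {X Y : Set (Fin d → ℝ)} (hX : X.Finite) (hXne : X.Nonempty)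
    (hY : Y.Finite) (hYne : Y.Nonempty) {δ : ℝ} :
    dirHaus X Y ≤ δ ↔ ∀ x ∈ X, ∃ y ∈ Y, ‖x - y‖ ≤ δ := by
  unfold dirHaus
  constructor
  · intro h x hx
    have hle : sInf ((fun y => ‖x - y‖) '' Y) ≤ δ :=
      le_trans (le_csSup (hX.image _).bddAbove (Set.mem_image_of_mem _ hx)) h
    have hmem : sInf ((fun y => ‖x - y‖) '' Y) ∈ (fun y => ‖x - y‖) '' Y :=
      (hYne.image _).csInf_mem (hY.image _)
    obtain ⟨y, hy, hyeq⟩ := hmem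
    exact ⟨y, hy, le_trans (le_of_eq hyeq) hle⟩
  · intro h
    refine csSup_le (hXne.image _) ?_
    rintro z ⟨x, hx, rfl⟩
    obtain ⟨y, hy, hle⟩ := h x hx
    exact le_trans (csInf_le (hY.image _).bddBelow ⟨y, hy, rfl⟩) hle

set_option maxHeartbeats 2000000 in
lemma gadget_coord (δ x g t : ℝ) (hδ : 0 < δ) (hx : |x| ≤ 5 * δ / 3) (ht : |t| ≤ δ / 3)
    (hg : g = -(2 * δ / 3) ∨ g = 0 ∨ g = 2 * δ / 3)
    (h1 : |x - g| ≤ |x - -(2 * δ / 3)|) (h2 : |x - g| ≤ |x - 0|)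
    (h3 : |x - g| ≤ |x - 2 * δ / 3|) :
    |3 / 2 * g + t - x| ≤ δ := by
  rw [abs_le] at hx ht ⊢
  rcases abs_cases (x - g) with ⟨eg, _⟩ | ⟨eg, _⟩ <;>
  rcases abs_cases (x - -(2 * δ / 3)) with ⟨e1, _⟩ | ⟨e1, _⟩ <;>
  rcases abs_cases (x - 0) with ⟨e2, _⟩ | ⟨e2, _⟩ <;>
  rcases abs_cases (x - 2 * δ / 3) with ⟨e3, _⟩ | ⟨e3, _⟩ <;>
  rcases hg with rfl | rfl | rfl <;>
  constructor <;> linarith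

/-- Correctness of the constant-size point gadget reducing the Translation
Problem with Orthants to undirected Hausdorff under translation: with Q inside
b + [−5δ/3, 5δ/3]^d, translations with ‖τ‖∞ ≤ δ/3, and γ(q) a coordinatewise
closest point of the grid {−2δ/3, 0, 2δ/3}^d to q − b, the gadget set
C = {b + (3/2)·γ(q) : q ∈ Q} satisfies: for every τ ∈ T,
δ→H(P+τ, Q) ≤ δ iff δH((P ∪ C)+τ, Q) ≤ δ. -/
theorem stmt10 (d : ℕ) (hd : 1 ≤ d) (δ : ℝ) (hδ : 0 < δ) (b : Fin d → ℝ)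
    (Q : Set (Fin d → ℝ)) (hQfin : Q.Finite) (hQne : Q.Nonempty)
    (hQb : ∀ q ∈ Q, ‖q - b‖ ≤ 5 * δ / 3)
    (P : Set (Fin d → ℝ)) (hPfin : P.Finite) (hPne : P.Nonempty)
    (T : Set (Fin d → ℝ)) (hT : ∀ τ ∈ T, ‖τ‖ ≤ δ / 3)
    (γ : (Fin d → ℝ) → (Fin d → ℝ))
    (hγgrid : ∀ q ∈ Q, ∀ r, γ q r ∈ ({-(2 * δ / 3), 0, 2 * δ / 3} : Set ℝ))
    (hγclosest : ∀ q ∈ Q, ∀ r, ∀ g ∈ ({-(2 * δ / 3), 0, 2 * δ / 3} : Set ℝ),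
        |(q - b) r - γ q r| ≤ |(q - b) r - g|)
    (C : Set (Fin d → ℝ)) (hC : C = (fun q => b + (3 / 2 : ℝ) • γ q) '' Q) :
    ∀ τ ∈ T,
      (dirHaus ((fun p => p + τ) '' P) Q ≤ δ ↔
        undirHaus ((fun p => p + τ) '' (P ∪ C)) Q ≤ δ) := by
  intro τ hτ
  have hCfin : C.Finite := hC ▸ hQfin.image _
  have hPCfin : (P ∪ C).Finite := hPfin.union hCfin
  have hPCne : (P ∪ C).Nonempty := hPne.inl
  have key : ∀ q ∈ Q, ‖(b + (3 / 2 : ℝ) • γ q + τ) - q‖ ≤ δ := by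
    intro q hq
    rw [pi_norm_le_iff_of_nonneg hδ.le]
    intro r
    have hx : |(q - b) r| ≤ 5 * δ / 3 :=
      le_trans (norm_le_pi_norm (q - b) r) (hQb q hq)
    have ht : |τ r| ≤ δ / 3 := le_trans (norm_le_pi_norm τ r) (hT τ hτ)
    have hg : γ q r = -(2 * δ / 3) ∨ γ q r = 0 ∨ γ q r = 2 * δ / 3 := by
      simpa using hγgrid q hq r
    have h1 := hγclosest q hq r (-(2 * δ / 3)) (by left; rfl)
    have h2 := hγclosest q hq r 0 (by right; left; rfl)
    have h3 := hγclosest q hq r (2 * δ / 3) (by right; right; rfl)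
    have hg' := gadget_coord δ ((q - b) r) (γ q r) (τ r) hδ hx ht hg h1 h2 h3
    have heq : ((b + (3 / 2 : ℝ) • γ q + τ) - q) r =
        3 / 2 * γ q r + τ r - (q - b) r := by
      simp [Pi.add_apply, Pi.sub_apply, Pi.smul_apply, smul_eq_mul]; ring
    rw [Real.norm_eq_abs, heq]
    exact hg'
  constructor
  · intro h
    rw [dirHaus_le_iff (hPfin.image _) (hPne.image _) hQfin hQne] at h
    rw [undirHaus, max_le_iff]
    constructor
    · rw [dirHaus_le_iff (hPCfin.image _) (hPCne.image _) hQfin hQne]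
      rintro x ⟨p, hp, rfl⟩
      rcases hp with hp | hp
      · exact h (p + τ) (Set.mem_image_of_mem _ hp)
      · rw [hC] at hp
        obtain ⟨q, hq, rfl⟩ := hp
        exact ⟨q, hq, key q hq⟩
    · rw [dirHaus_le_iff hQfin hQne (hPCfin.image _) (hPCne.image _)]
      intro q hq
      refine ⟨b + (3 / 2 : ℝ) • γ q + τ,
        Set.mem_image_of_mem _ (Or.inr (hC ▸ Set.mem_image_of_mem _ hq)), ?_⟩
      rw [norm_sub_rev]
      exact key q hq
  · intro h
    rw [undirHaus, max_le_iff] at h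
    rw [dirHaus_le_iff (hPCfin.image _) (hPCne.image _) hQfin hQne] at h
    rw [dirHaus_le_iff (hPfin.image _) (hPne.image _) hQfin hQne]
    rintro x ⟨p, hp, rfl⟩
    exact h.1 (p + τ) (Set.mem_image_of_mem _ (Or.inl hp))
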